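/- If G is a connected bipartite graph, then the following are equivalent: (i) G is α⁻-stable; (ii) μ(G − e) = μ(G) for every edge e of G; (iii) no edge of G is contained in every maximum matching of G (the intersection of all maximum matchings of G is empty). -/

import Mathlib

open Finset

variable {V : Type*}

/-- A stable (independent) set of vertices of `G`. -/
def IsStableSet (G : SimpleGraph V) (S : Finset V) : Prop :=
  ∀ u ∈ S, ∀ v ∈ S, ¬ G.Adj u v

/-- The stability number `α(G)`: the maximum cardinality of a stable set. -/
noncomputable def stabNum (G : SimpleGraph V) [Fintype V] : ℕ :=
  sSup {n : ℕ | ∃ S : Finset V, IsStableSet G S ∧ S.card = n}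

/-- A stability system of `G`: a stable set of maximum cardinality. -/
def IsStabSystem (G : SimpleGraph V) [Fintype V] (S : Finset V) : Prop :=
  IsStableSet G S ∧ S.card = stabNum G

/-- `G` is α⁻-stable: deleting any edge leaves the stability number unchanged. -/
def AlphaMinusStable (G : SimpleGraph V) [Fintype V] : Prop :=
  ∀ u v : V, G.Adj u v → stabNum (G.deleteEdges {s(u, v)}) = stabNum G

/-- `G` is α⁺-stable: adding any edge of the complement leaves the stability
number unchanged. -/
def AlphaPlusStable (G : SimpleGraph V) [Fintype V] : Prop :=
  ∀ u v : V, u ≠ v → ¬ G.Adj u v →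
    stabNum (G ⊔ SimpleGraph.fromEdgeSet {s(u, v)}) = stabNum G

/-- A matching of `G`, viewed as a set of pairwise non-incident edges. -/
def IsMatchingSet (G : SimpleGraph V) (M : Finset (Sym2 V)) : Prop :=
  (↑M : Set (Sym2 V)) ⊆ G.edgeSet ∧
    ∀ e ∈ M, ∀ f ∈ M, e ≠ f → ∀ v : V, ¬ (v ∈ e ∧ v ∈ f)

/-- The matching number `μ(G)`. -/
noncomputable def matchNum (G : SimpleGraph V) [Fintype V] : ℕ :=
  sSup {n : ℕ | ∃ M : Finset (Sym2 V), IsMatchingSet G M ∧ M.card = n}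

/-- A maximum matching of `G`. -/
def IsMaximumMatching (G : SimpleGraph V) [Fintype V] (M : Finset (Sym2 V)) : Prop :=
  IsMatchingSet G M ∧ M.card = matchNum G

/-- A perfect matching of `G`: a matching covering every vertex. -/
def IsPerfectMatchingSet (G : SimpleGraph V) (M : Finset (Sym2 V)) : Prop :=
  IsMatchingSet G M ∧ ∀ v : V, ∃ e ∈ M, v ∈ e

/-- A pendant vertex: a vertex of degree one. -/
def IsPendant (G : SimpleGraph V) (v : V) : Prop :=
  (G.neighborSet v).ncard = 1

/-- A set `D` is 2-dominating: every vertex outside `D` has at least two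
neighbors in `D`. -/
def Is2Dominating (G : SimpleGraph V) (D : Finset V) : Prop :=
  ∀ v : V, v ∉ D → 2 ≤ ({u : V | u ∈ D ∧ G.Adj v u}).ncard

/-- A chordal graph: no induced cycle on four or more vertices. -/
def IsChordal (G : SimpleGraph V) : Prop :=
  ∀ n : ℕ, 4 ≤ n → IsEmpty (SimpleGraph.cycleGraph n ↪g G)

/-- A bipartite graph: the vertex set is partitioned into two stable sets. -/
def IsBipartiteGr (G : SimpleGraph V) [Fintype V] [DecidableEq V] : Prop :=
  ∃ C : Finset V, IsStableSet G C ∧ IsStableSet G Cᶜ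

/-- A strong unique independence graph: a graph with a unique stability system
whose complement is also stable. -/
def IsStrongUniqueIndep (G : SimpleGraph V) [Fintype V] [DecidableEq V] : Prop :=
  ∃ S : Finset V, IsStabSystem G S ∧ (∀ S' : Finset V, IsStabSystem G S' → S' = S) ∧
    IsStableSet G Sᶜ

/-- A bistable bipartite graph: its two color classes are its only two
stability systems. -/
def IsBistable (G : SimpleGraph V) [Fintype V] [DecidableEq V] : Prop :=
  ∃ A : Finset V, IsStableSet G A ∧ IsStableSet G Aᶜ ∧
    IsStabSystem G A ∧ IsStabSystem G Aᶜ ∧ A ≠ Aᶜ ∧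
    ∀ S : Finset V, IsStabSystem G S → S = A ∨ S = Aᶜ

/-- A vertex cover of `G`. -/
def IsVertexCover (G : SimpleGraph V) (C : Finset V) : Prop :=
  ∀ u v : V, G.Adj u v → u ∈ C ∨ v ∈ C

/-- A minimum vertex cover of `G`. -/
def IsMinVertexCover (G : SimpleGraph V) [Fintype V] (C : Finset V) : Prop :=
  IsVertexCover G C ∧ ∀ C' : Finset V, IsVertexCover G C' → C.card ≤ C'.card

/-!
For bipartite `G`, König's theorem says that `μ(G)` equals the minimum size of a vertex cover, and
complements of vertex covers are exactly the stable sets, so `μ(G) + α(G) = |V|`. Every spanning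
subgraph of `G` is bipartite too, hence `α(G − e) = α(G)` exactly when `μ(G − e) = μ(G)`, which in
turn says that some maximum matching of `G` avoids `e`.

For König's inequality, Hall's theorem matches a minimum cover `C` into its complement: a stable
`S ⊆ C` with fewer than `|S|` neighbours outside `C` could be traded for those neighbours, giving a
smaller cover.
-/

section Extremal

variable {G H : SimpleGraph V}

lemma IsStableSet.subset {S T : Finset V} (hT : IsStableSet G T) (h : S ⊆ T) :
    IsStableSet G S :=
  fun u hu v hv => hT u (h hu) v (h hv)

lemma IsMatchingSet.mono {M : Finset (Sym2 V)} (hM : IsMatchingSet H M) (h : H ≤ G) :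
    IsMatchingSet G M :=
  ⟨hM.1.trans (SimpleGraph.edgeSet_mono h), hM.2⟩

variable [Fintype V]

lemma bddAbove_card_stableSets (G : SimpleGraph V) :
    BddAbove {n : ℕ | ∃ S : Finset V, IsStableSet G S ∧ S.card = n} :=
  ⟨Fintype.card V, by rintro n ⟨S, -, rfl⟩; exact S.card_le_univ⟩

lemma bddAbove_card_matchingSets (G : SimpleGraph V) :
    BddAbove {n : ℕ | ∃ M : Finset (Sym2 V), IsMatchingSet G M ∧ M.card = n} :=
  ⟨Fintype.card (Sym2 V), by rintro n ⟨M, -, rfl⟩; exact M.card_le_univ⟩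

lemma exists_isStabSystem (G : SimpleGraph V) : ∃ S : Finset V, IsStabSystem G S :=
  Nat.sSup_mem (s := {n | ∃ S : Finset V, IsStableSet G S ∧ S.card = n})
    ⟨0, ∅, fun _ hu => absurd hu (notMem_empty _), rfl⟩ (bddAbove_card_stableSets G)

lemma exists_isMaximumMatching (G : SimpleGraph V) : ∃ M, IsMaximumMatching G M :=
  Nat.sSup_mem (s := {n | ∃ M : Finset (Sym2 V), IsMatchingSet G M ∧ M.card = n})
    ⟨0, ∅, ⟨by simp, fun _ he => absurd he (notMem_empty _)⟩, rfl⟩ (bddAbove_card_matchingSets G)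

lemma IsStableSet.card_le_stabNum {S : Finset V} (hS : IsStableSet G S) :
    S.card ≤ stabNum G :=
  le_csSup (bddAbove_card_stableSets G) ⟨S, hS, rfl⟩

lemma IsMatchingSet.card_le_matchNum {M : Finset (Sym2 V)} (hM : IsMatchingSet G M) :
    M.card ≤ matchNum G :=
  le_csSup (bddAbove_card_matchingSets G) ⟨M, hM, rfl⟩

lemma matchNum_mono (h : H ≤ G) : matchNum H ≤ matchNum G := by
  obtain ⟨M, hM, hcard⟩ := exists_isMaximumMatching H
  exact hcard ▸ (hM.mono h).card_le_matchNum

end Extremal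

section Covers

variable {G : SimpleGraph V}

lemma IsMatchingSet.card_le_card_of_isVertexCover {M : Finset (Sym2 V)} {C : Finset V}
    (hM : IsMatchingSet G M) (hC : IsVertexCover G C) : M.card ≤ C.card := by
  refine card_le_card_of_forall_subsingleton (fun e v => v ∈ e) (fun e he => ?_)
    fun v _ e₁ he₁ e₂ he₂ => by_contra fun hne => hM.2 e₁ he₁.1 e₂ he₂.1 hne v ⟨he₁.2, he₂.2⟩
  induction e with
  | h u v =>
    rcases hC u v (hM.1 he) with hu | hv
    · exact ⟨u, hu, Sym2.mem_mk_left u v⟩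
    · exact ⟨v, hv, Sym2.mem_mk_right u v⟩

variable [Fintype V]

lemma exists_isMinVertexCover (G : SimpleGraph V) : ∃ C, IsMinVertexCover G C := by
  classical
  obtain ⟨C, hC, hmin⟩ := (univ.filter (IsVertexCover G)).exists_min_image card
    ⟨univ, mem_filter.2 ⟨mem_univ _, fun u _ _ => Or.inl (mem_univ u)⟩⟩
  exact ⟨C, (mem_filter.1 hC).2, fun C' hC' => hmin C' (mem_filter.2 ⟨mem_univ _, hC'⟩)⟩

variable [DecidableEq V]

lemma IsStableSet.isVertexCover_compl {S : Finset V} (hS : IsStableSet G S) :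
    IsVertexCover G Sᶜ := by
  intro u v huv
  by_contra! h
  simp only [mem_compl, not_not] at h
  exact hS u h.1 v h.2 huv

lemma IsVertexCover.isStableSet_compl {C : Finset V} (hC : IsVertexCover G C) :
    IsStableSet G Cᶜ := by
  intro u hu v hv huv
  rcases hC u v huv with h | h
  exacts [mem_compl.1 hu h, mem_compl.1 hv h]

lemma matchNum_add_stabNum_le (G : SimpleGraph V) : matchNum G + stabNum G ≤ Fintype.card V := by
  obtain ⟨M, hM, hMcard⟩ := exists_isMaximumMatching G
  obtain ⟨S, hS, hScard⟩ := exists_isStabSystem G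
  have hle := hM.card_le_card_of_isVertexCover hS.isVertexCover_compl
  rw [card_compl] at hle
  have := S.card_le_univ
  omega

end Covers

section Konig

variable [Fintype V] [DecidableEq V] {G : SimpleGraph V}

def neighborFinsetOutside (G : SimpleGraph V) [DecidableRel G.Adj] (C : Finset V) (x : V) :
    Finset V :=
  {y | G.Adj x y ∧ y ∉ C}

lemma IsMinVertexCover.card_le_card_biUnion_of_isStableSet [DecidableRel G.Adj]
    {C S : Finset V} (hC : IsMinVertexCover G C) (hSC : S ⊆ C) (hS : IsStableSet G S) :
    S.card ≤ (S.biUnion (neighborFinsetOutside G C)).card := by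
  by_contra! hlt
  set N := S.biUnion (neighborFinsetOutside G C)
  have hcover : ∀ u v, G.Adj u v → u ∈ C → u ∈ C \ S ∪ N ∨ v ∈ C \ S ∪ N := by
    intro u v huv hu
    by_cases huS : u ∈ S
    · by_cases hvC : v ∈ C
      · exact Or.inr (mem_union_left _ (mem_sdiff.2 ⟨hvC, fun hvS => hS u huS v hvS huv⟩))
      · exact Or.inr (mem_union_right _ (mem_biUnion.2
          ⟨u, huS, by simp [neighborFinsetOutside, huv, hvC]⟩))
    · exact Or.inl (mem_union_left _ (mem_sdiff.2 ⟨hu, huS⟩))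
  have hcov : IsVertexCover G (C \ S ∪ N) := fun u v huv =>
    (hC.1 u v huv).elim (hcover u v huv) fun hv => (hcover v u huv.symm hv).symm
  have hmin := hC.2 _ hcov
  have := card_union_le (C \ S) N
  have := card_sdiff_of_subset hSC
  have := card_le_card hSC
  omega

/-- The two sides of `S` have their neighbourhoods outside `C` on opposite sides, so these are
disjoint. -/
lemma IsMinVertexCover.card_le_card_biUnion [DecidableRel G.Adj] {A C S : Finset V}
    (hA : IsStableSet G A) (hAc : IsStableSet G Aᶜ) (hC : IsMinVertexCover G C) (hSC : S ⊆ C) :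
    S.card ≤ (S.biUnion (neighborFinsetOutside G C)).card := by
  set S₁ := S.filter (· ∈ A)
  set S₂ := S.filter (· ∉ A)
  have hdisj : Disjoint (S₁.biUnion (neighborFinsetOutside G C))
      (S₂.biUnion (neighborFinsetOutside G C)) := by
    simp only [disjoint_left, mem_biUnion, neighborFinsetOutside, mem_filter, mem_univ, true_and,
      S₁, S₂]
    rintro y ⟨x₁, ⟨-, hx₁⟩, hx₁y, -⟩ ⟨x₂, ⟨-, hx₂⟩, hx₂y, -⟩
    by_cases hy : y ∈ A
    · exact hA x₁ hx₁ y hy hx₁y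
    · exact hAc x₂ (mem_compl.2 hx₂) y (mem_compl.2 hy) hx₂y
  calc S.card = S₁.card + S₂.card := (card_filter_add_card_filter_not _).symm
    _ ≤ (S₁.biUnion (neighborFinsetOutside G C)).card +
        (S₂.biUnion (neighborFinsetOutside G C)).card := by
      refine add_le_add ?_ ?_
      · exact hC.card_le_card_biUnion_of_isStableSet ((filter_subset _ _).trans hSC)
          (hA.subset fun x hx => (mem_filter.1 hx).2)
      · exact hC.card_le_card_biUnion_of_isStableSet ((filter_subset _ _).trans hSC)
          (hAc.subset fun x hx => mem_compl.2 (mem_filter.1 hx).2)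
    _ = (S₁.biUnion (neighborFinsetOutside G C) ∪
        S₂.biUnion (neighborFinsetOutside G C)).card := (card_union_of_disjoint hdisj).symm
    _ ≤ (S.biUnion (neighborFinsetOutside G C)).card :=
      card_le_card (union_subset (biUnion_subset_biUnion_of_subset_left _ (filter_subset _ _))
        (biUnion_subset_biUnion_of_subset_left _ (filter_subset _ _)))

lemma card_le_matchNum_of_injective {C : Finset V} (f : C → V) (hf : Function.Injective f)
    (hadj : ∀ x : C, G.Adj x (f x)) (hout : ∀ x, f x ∉ C) : C.card ≤ matchNum G := by
  set M := univ.image fun x : C => s((x : V), f x)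
  have hM : IsMatchingSet G M := by
    refine ⟨?_, ?_⟩
    · rintro e he
      obtain ⟨x, -, rfl⟩ := mem_image.1 he
      exact hadj x
    · intro e he e' he' hne v ⟨hv, hv'⟩
      obtain ⟨x, -, rfl⟩ := mem_image.1 he
      obtain ⟨x', -, rfl⟩ := mem_image.1 he'
      rcases Sym2.mem_iff.1 hv with rfl | rfl <;> rcases Sym2.mem_iff.1 hv' with h | h
      · exact hne (by rw [Subtype.ext h])
      · exact hout x' (h ▸ x.2)
      · exact hout x (h ▸ x'.2)
      · exact hne (by rw [hf h])
  have hinj : Function.Injective fun x : C => s((x : V), f x) := by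
    intro x x' h
    rcases Sym2.eq_iff.1 h with ⟨h, -⟩ | ⟨h, -⟩
    · exact Subtype.ext h
    · exact absurd (h ▸ x.2) (hout x')
  calc C.card = M.card := by rw [card_image_of_injective _ hinj, card_univ, Fintype.card_coe]
    _ ≤ matchNum G := hM.card_le_matchNum

theorem IsMinVertexCover.card_le_matchNum {A C : Finset V} (hA : IsStableSet G A)
    (hAc : IsStableSet G Aᶜ) (hC : IsMinVertexCover G C) : C.card ≤ matchNum G := by
  classical
  obtain ⟨f, hf, hfC⟩ := (all_card_le_biUnion_card_iff_exists_injective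
    fun x : C => neighborFinsetOutside G C x).1 fun s => by
      have := hC.card_le_card_biUnion hA hAc (S := s.image Subtype.val)
        fun x hx => by obtain ⟨y, -, rfl⟩ := mem_image.1 hx; exact y.2
      rwa [card_image_of_injective _ Subtype.val_injective, image_biUnion] at this
  simp only [neighborFinsetOutside, mem_filter, mem_univ, true_and] at hfC
  exact card_le_matchNum_of_injective f hf (fun x => (hfC x).1) fun x => (hfC x).2

theorem IsBipartiteGr.matchNum_add_stabNum (hG : IsBipartiteGr G) :
    matchNum G + stabNum G = Fintype.card V := by
  obtain ⟨A, hA, hAc⟩ := hG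
  obtain ⟨C, hC⟩ := exists_isMinVertexCover G
  have hμ := hC.card_le_matchNum hA hAc
  have hα := hC.1.isStableSet_compl.card_le_stabNum
  rw [card_compl] at hα
  have := matchNum_add_stabNum_le G
  omega

lemma IsBipartiteGr.anti {H : SimpleGraph V} (hG : IsBipartiteGr G) (h : H ≤ G) :
    IsBipartiteGr H :=
  let ⟨A, hA, hAc⟩ := hG
  ⟨A, fun u hu v hv huv => hA u hu v hv (h huv), fun u hu v hv huv => hAc u hu v hv (h huv)⟩

lemma IsBipartiteGr.stabNum_eq_iff_matchNum_eq {H : SimpleGraph V} (hG : IsBipartiteGr G)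
    (h : H ≤ G) : stabNum H = stabNum G ↔ matchNum H = matchNum G := by
  have := hG.matchNum_add_stabNum
  have := (hG.anti h).matchNum_add_stabNum
  omega

end Konig

section MaximumMatchings

variable [Fintype V] {G : SimpleGraph V}

lemma matchNum_deleteEdges_eq_iff (e : Sym2 V) :
    matchNum (G.deleteEdges {e}) = matchNum G ↔ ∃ M, IsMaximumMatching G M ∧ e ∉ M := by
  constructor
  · intro h
    obtain ⟨M, hM, hcard⟩ := exists_isMaximumMatching (G.deleteEdges {e})
    refine ⟨M, ⟨hM.mono (G.deleteEdges_le _), hcard.trans h⟩, fun he => ?_⟩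
    have := hM.1 he
    rw [SimpleGraph.edgeSet_deleteEdges] at this
    exact this.2 rfl
  · rintro ⟨M, ⟨hM, hcard⟩, he⟩
    refine le_antisymm (matchNum_mono (G.deleteEdges_le _)) (hcard ▸ IsMatchingSet.card_le_matchNum
      ⟨fun f hf => ?_, hM.2⟩)
    rw [SimpleGraph.edgeSet_deleteEdges]
    exact ⟨hM.1 hf, fun hfe => he (Set.mem_singleton_iff.1 hfe ▸ hf)⟩

lemma iInter_maximumMatchings_eq_empty_iff :
    (⋂ M ∈ {M : Finset (Sym2 V) | IsMaximumMatching G M}, (↑M : Set (Sym2 V))) = ∅ ↔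
      ∀ e ∈ G.edgeSet, ∃ M, IsMaximumMatching G M ∧ e ∉ M := by
  simp only [Set.eq_empty_iff_forall_notMem, Set.mem_iInter, Set.mem_ofPred_eq, mem_coe, not_forall,
    exists_prop]
  refine ⟨fun h e _ => h e, fun h e => ?_⟩
  by_cases he : e ∈ G.edgeSet
  · exact h e he
  · obtain ⟨M, hM⟩ := exists_isMaximumMatching G
    exact ⟨M, hM, fun heM => he (hM.1.1 heM)⟩

end MaximumMatchings

theorem stmt7_general {V : Type*} [Fintype V] [DecidableEq V] (G : SimpleGraph V)
    (hbip : IsBipartiteGr G) :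
    List.TFAE
      [ AlphaMinusStable G,
        ∀ u v : V, G.Adj u v → matchNum (G.deleteEdges {s(u, v)}) = matchNum G,
        (⋂ M ∈ {M : Finset (Sym2 V) | IsMaximumMatching G M}, (↑M : Set (Sym2 V))) = ∅ ] := by
  tfae_have 1 ↔ 2 := forall₃_congr fun u v _ =>
    hbip.stabNum_eq_iff_matchNum_eq (G.deleteEdges_le _)
  tfae_have 2 ↔ 3 := by
    rw [iInter_maximumMatchings_eq_empty_iff, Sym2.forall]
    simp only [SimpleGraph.mem_edgeSet, matchNum_deleteEdges_eq_iff]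
  tfae_finish

/-- For a connected bipartite graph `G`, the following are
equivalent: (i) `G` is α⁻-stable; (ii) `μ(G − e) = μ(G)` for every edge `e`;
(iii) the intersection of all maximum matchings of `G` is empty. -/
theorem stmt7 {V : Type*} [Fintype V] [DecidableEq V] (G : SimpleGraph V)
    (hc : G.Connected) (hbip : IsBipartiteGr G) :
    List.TFAE
      [ AlphaMinusStable G,
        ∀ u v : V, G.Adj u v → matchNum (G.deleteEdges {s(u, v)}) = matchNum G,
        (⋂ M ∈ {M : Finset (Sym2 V) | IsMaximumMatching G M}, (↑M : Set (Sym2 V))) = ∅ ] :=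
  stmt7_general G hbip
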